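/- Let F_s : U → ℂ^N \ {0} satisfy ∂(conj F_s) = −(‖F_s‖²/‖F_{s−1}‖²)·conj F_{s−1} for 2 ≤ s ≤ n. Then for 1 ≤ k ≤ n−1, the k-th Wirtinger derivative ∂^k(conj F_n) lies in span_ℂ{conj F_{n−k}, …, conj F_{n−1}} at every point of U. -/

import Mathlib

/-- The symmetric (complex bilinear) product `⟨v,w⟩ = Σ v_j w_j` (no conjugation). -/
noncomputable def symProd {N : ℕ} (v w : Fin N → ℂ) : ℂ := ∑ j, v j * w j

/-- Componentwise complex conjugation. -/
def conjV {N : ℕ} (v : Fin N → ℂ) : Fin N → ℂ := fun j => (starRingEnd ℂ) (v j)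

/-- The Wirtinger derivative `∂ = ∂/∂z`. -/
noncomputable def wd {E : Type*} [NormedAddCommGroup E] [NormedSpace ℂ E]
    (f : ℂ → E) (z : ℂ) : E :=
  (1 / 2 : ℂ) • (fderiv ℝ f z 1 - Complex.I • fderiv ℝ f z Complex.I)

/-- The anti-Wirtinger derivative `∂̄ = ∂/∂z̄`. -/
noncomputable def wdb {E : Type*} [NormedAddCommGroup E] [NormedSpace ℂ E]
    (f : ℂ → E) (z : ℂ) : E :=
  (1 / 2 : ℂ) • (fderiv ℝ f z 1 + Complex.I • fderiv ℝ f z Complex.I)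

/-- Iterated Wirtinger derivative `∂^k`. -/
noncomputable def itWd {E : Type*} [NormedAddCommGroup E] [NormedSpace ℂ E] :
    ℕ → (ℂ → E) → (ℂ → E)
  | 0, f => f
  | k + 1, f => fun z => wd (itWd k f) z

section helpers
variable {E : Type*} [NormedAddCommGroup E] [NormedSpace ℂ E]

lemma wd_congr {f g : ℂ → E} {z : ℂ} (h : f =ᶠ[nhds z] g) : wd f z = wd g z := by
  unfold wd; rw [h.fderiv_eq]

lemma wd_zero (z : ℂ) : wd (fun _ => (0:E)) z = 0 := by
  unfold wd; simp

lemma wd_sum {ι : Type*} (s : Finset ι) (f : ι → ℂ → E) {z : ℂ}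
    (hf : ∀ i ∈ s, DifferentiableAt ℝ (f i) z) :
    wd (fun w => ∑ i ∈ s, f i w) z = ∑ i ∈ s, wd (f i) z := by
  unfold wd
  rw [fderiv_fun_sum hf]
  simp only [ContinuousLinearMap.sum_apply, Finset.smul_sum]
  rw [← Finset.sum_sub_distrib, Finset.smul_sum]

lemma wd_smul {c : ℂ → ℂ} {g : ℂ → E} {z : ℂ} (hc : DifferentiableAt ℝ c z)
    (hg : DifferentiableAt ℝ g z) :
    wd (fun w => c w • g w) z = wd c z • g z + c z • wd g z := by
  have h := (hc.hasFDerivAt.smul hg.hasFDerivAt).fderiv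
  unfold wd
  rw [show (fun w => c w • g w) = c • g from rfl, h]
  simp only [ContinuousLinearMap.add_apply, ContinuousLinearMap.smul_apply,
    ContinuousLinearMap.coe_smul', Pi.smul_apply, ContinuousLinearMap.smulRight_apply,
    ContinuousLinearMap.coe_coe, smul_eq_mul]
  module

variable {N : ℕ} {U : Set ℂ}

lemma contDiffOn_conjV {F : ℂ → Fin N → ℂ} (h : ContDiffOn ℝ (⊤ : ℕ∞) F U) :
    ContDiffOn ℝ (⊤ : ℕ∞) (fun z => conjV (F z)) U := by
  rw [contDiffOn_pi] at h ⊢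
  intro j
  exact Complex.conjCLE.contDiff.comp_contDiffOn (h j)

lemma contDiffOn_Q {F : ℂ → Fin N → ℂ} (h : ContDiffOn ℝ (⊤ : ℕ∞) F U) :
    ContDiffOn ℝ (⊤ : ℕ∞) (fun z => symProd (F z) (conjV (F z))) U := by
  unfold symProd conjV
  apply ContDiffOn.sum
  intro j _
  exact ((contDiffOn_pi.1 h) j).mul
    (Complex.conjCLE.contDiff.comp_contDiffOn ((contDiffOn_pi.1 h) j))

lemma Q_ne_zero {v : Fin N → ℂ} (hv : v ≠ 0) : symProd v (conjV v) ≠ 0 := by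
  have hQ : symProd v (conjV v) = ((∑ j, Complex.normSq (v j) : ℝ) : ℂ) := by
    simp [symProd, conjV, Complex.mul_conj]
  rw [hQ, Ne, Complex.ofReal_eq_zero]
  obtain ⟨j, hj⟩ := Function.ne_iff.1 hv
  have h1 : 0 < Complex.normSq (v j) := Complex.normSq_pos.2 hj
  have h2 : Complex.normSq (v j) ≤ ∑ i, Complex.normSq (v i) :=
    Finset.single_le_sum (fun i _ => Complex.normSq_nonneg _) (Finset.mem_univ j)
  exact ne_of_gt (lt_of_lt_of_le h1 h2)

lemma contDiffOn_wd {c : ℂ → ℂ} (hc : ContDiffOn ℝ (⊤ : ℕ∞) c U) (hU : IsOpen U) :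
    ContDiffOn ℝ (⊤ : ℕ∞) (fun z => wd c z) U := by
  unfold wd
  have h1 : ContDiffOn ℝ (⊤ : ℕ∞) (fun z => fderiv ℝ c z 1) U :=
    (hc.fderiv_of_isOpen hU (by simp)).clm_apply contDiffOn_const
  have h2 : ContDiffOn ℝ (⊤ : ℕ∞) (fun z => fderiv ℝ c z Complex.I) U :=
    (hc.fderiv_of_isOpen hU (by simp)).clm_apply contDiffOn_const
  exact ((h1.sub (h2.const_smul Complex.I))).const_smul ((1:ℂ)/2)

end helpers

/-- If the nowhere-zero maps `F_s` satisfy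
`∂(conj F_s) = −(‖F_s‖²/‖F_{s−1}‖²)·conj F_{s−1}` for `2 ≤ s ≤ n`, then for
`1 ≤ k ≤ n − 1` the iterated Wirtinger derivative `∂^k(conj F_n)` lies in
`span_ℂ{conj F_{n−k}, …, conj F_{n−1}}` at every point of `U`. -/
theorem iterated_deriv_in_span (N n : ℕ) (U : Set ℂ) (hU : IsOpen U)
    (F : ℕ → ℂ → Fin N → ℂ)
    (hsm : ∀ s, s ≤ n → ContDiffOn ℝ (⊤ : ℕ∞) (F s) U)
    (hnz : ∀ s, s ≤ n → ∀ z ∈ U, F s z ≠ 0)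
    (hrec : ∀ s, 2 ≤ s → s ≤ n → ∀ z ∈ U,
      wd (fun w => conjV (F s w)) z =
        (-(symProd (F s z) (conjV (F s z)) /
            symProd (F (s - 1) z) (conjV (F (s - 1) z)))) • conjV (F (s - 1) z)) :
    ∀ k, 1 ≤ k → k ≤ n - 1 → ∀ z ∈ U,
      itWd k (fun w => conjV (F n w)) z ∈
        Submodule.span ℂ {v | ∃ s, n - k ≤ s ∧ s ≤ n - 1 ∧ v = conjV (F s z)} := by
  set Lam : ℕ → ℂ → ℂ := fun s z =>
    -(symProd (F s z) (conjV (F s z)) / symProd (F (s-1) z) (conjV (F (s-1) z))) with hLamdef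
  have hLamSm : ∀ s, s ≤ n → ContDiffOn ℝ (⊤ : ℕ∞) (Lam s) U := by
    intro s hs
    have h := (((contDiffOn_Q (hsm s hs)).mul
      ((contDiffOn_Q (hsm (s-1) (by omega))).inv
        (fun z hz => Q_ne_zero (hnz (s-1) (by omega) z hz))))).neg
    simpa only [hLamdef, div_eq_mul_inv, Pi.inv_apply] using h
  have hdiffF : ∀ z ∈ U, ∀ s, s ≤ n → DifferentiableAt ℝ (fun w => conjV (F s w)) z :=
    fun z hz s hs => ((contDiffOn_conjV (hsm s hs)).contDiffAt (hU.mem_nhds hz)).differentiableAt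
      (by simp)
  have key : ∀ k, 1 ≤ k → k ≤ n - 1 → ∃ c : ℕ → ℂ → ℂ,
      (∀ s, ContDiffOn ℝ (⊤ : ℕ∞) (c s) U) ∧
      (∀ s, s ∉ Finset.Icc (n-k) (n-1) → c s = fun _ => 0) ∧
      (∀ z ∈ U, itWd k (fun w => conjV (F n w)) z =
        ∑ t ∈ Finset.range n, c t z • conjV (F t z)) := by
    intro k
    induction k with
    | zero => omega
    | succ k ih =>
      intro _ hk1
      by_cases hk0 : k = 0
      · -- base case k+1 = 1
        subst hk0
        have hn2 : 2 ≤ n := by omega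
        refine ⟨fun t => if t = n-1 then Lam n else fun _ => 0, ?_, ?_, ?_⟩
        · intro s
          by_cases h : s = n-1
          · simp only [if_pos h]; exact hLamSm n le_rfl
          · simp only [if_neg h]; exact contDiffOn_const
        · intro s hs
          have h : ¬ s = n - 1 := fun h => hs (by simp [h, Finset.mem_Icc])
          simp only [if_neg h]
        · intro z hz
          have h1 : itWd 1 (fun w => conjV (F n w)) z = wd (fun w => conjV (F n w)) z := rfl
          rw [h1, hrec n hn2 le_rfl z hz,
            Finset.sum_eq_single_of_mem (n-1) (Finset.mem_range.2 (by omega))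
              (fun t _ hne => by simp [hne])]
          simp [hLamdef]
      · -- inductive step
        have hk : 1 ≤ k := by omega
        obtain ⟨c, hcsm, hcsupp, hcrep⟩ := ih hk (by omega)
        have hnk2 : 2 ≤ n - k := by omega
        refine ⟨fun t => if t ∈ Finset.Icc (n-(k+1)) (n-1) then
            (fun z => wd (c t) z + c (t+1) z * Lam (t+1) z) else fun _ => 0, ?_, ?_, ?_⟩
        · intro s
          by_cases h : s ∈ Finset.Icc (n-(k+1)) (n-1)
          · simp only [if_pos h]
            have hs1 : s + 1 ≤ n := by
              have := (Finset.mem_Icc.1 h).2; omega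
            exact (contDiffOn_wd (hcsm s) hU).add ((hcsm (s+1)).mul (hLamSm (s+1) hs1))
          · simp only [if_neg h]; exact contDiffOn_const
        · intro s hs; simp only [if_neg hs]
        · intro z hz
          have hcdiff : ∀ t, DifferentiableAt ℝ (c t) z :=
            fun t => ((hcsm t).contDiffAt (hU.mem_nhds hz)).differentiableAt (by simp)
          have h1 : itWd (k+1) (fun w => conjV (F n w)) z
              = wd (itWd k (fun w => conjV (F n w))) z := rfl
          have h2 : wd (itWd k (fun w => conjV (F n w))) z
              = wd (fun w => ∑ t ∈ Finset.range n, c t w • conjV (F t w)) z :=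
            wd_congr (Filter.eventuallyEq_of_mem (hU.mem_nhds hz) (fun w hw => hcrep w hw))
          have h3 : wd (fun w => ∑ t ∈ Finset.range n, c t w • conjV (F t w)) z
              = ∑ t ∈ Finset.range n, wd (fun w => c t w • conjV (F t w)) z :=
            wd_sum _ _ (fun t ht =>
              (hcdiff t).smul (hdiffF z hz t (by have := Finset.mem_range.1 ht; omega)))
          have h4 : ∀ t ∈ Finset.range n, wd (fun w => c t w • conjV (F t w)) z
              = wd (c t) z • conjV (F t z) + (c t z * Lam t z) • conjV (F (t-1) z) := by
            intro t ht
            have htn : t ≤ n := le_of_lt (Finset.mem_range.1 ht)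
            by_cases h : t ∈ Finset.Icc (n-k) (n-1)
            · obtain ⟨hta, htb⟩ := Finset.mem_Icc.1 h
              rw [wd_smul (hcdiff t) (hdiffF z hz t htn), hrec t (by omega) htn z hz,
                smul_smul]
            · have hct : c t = fun _ => 0 := hcsupp t h
              have hwz : wd (c t) z = 0 := by rw [hct]; exact wd_zero z
              have hctz : c t z = 0 := by rw [hct]
              have : (fun w => c t w • conjV (F t w)) = fun _ => (0 : Fin N → ℂ) := by
                funext w; rw [hct]; simp
              rw [this, wd_zero, hwz, hctz]; simp
          rw [h1, h2, h3, Finset.sum_congr rfl h4, Finset.sum_add_distrib]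
          -- shift the second sum
          set b : ℕ → Fin N → ℂ := fun t => (c t z * Lam t z) • conjV (F (t-1) z) with hbdef
          have hczero : ∀ t, t ∉ Finset.Icc (n-k) (n-1) → c t z = 0 := by
            intro t ht; rw [hcsupp t ht]
          have hb0 : b 0 = 0 := by
            have : c 0 z = 0 := hczero 0 (by simp [Finset.mem_Icc]; omega)
            simp [hbdef, this]
          have hbn : b n = 0 := by
            have : c n z = 0 := hczero n (by simp [Finset.mem_Icc]; omega)
            simp [hbdef, this]
          obtain ⟨m, rfl⟩ : ∃ m, n = m + 1 := ⟨n - 1, by omega⟩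
          have hshift : ∑ t ∈ Finset.range (m+1), b t = ∑ t ∈ Finset.range (m+1), b (t+1) := by
            rw [Finset.sum_range_succ' b m, Finset.sum_range_succ (fun t => b (t+1)) m]
            simp only [hb0, hbn, add_zero]
          rw [hshift, ← Finset.sum_add_distrib]
          apply Finset.sum_congr rfl
          intro t ht
          have htm : t < m + 1 := Finset.mem_range.1 ht
          have hbt1 : b (t+1) = (c (t+1) z * Lam (t+1) z) • conjV (F t z) := by
            simp [hbdef]
          rw [hbt1, ← add_smul]
          by_cases h : t ∈ Finset.Icc (m+1-(k+1)) (m+1-1)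
          · simp only [if_pos h]
          · simp only [if_neg h]
            have h1' : t ∉ Finset.Icc (m+1-k) (m+1-1) := by
              simp only [Finset.mem_Icc] at h ⊢; omega
            have h2' : t+1 ∉ Finset.Icc (m+1-k) (m+1-1) := by
              simp only [Finset.mem_Icc] at h ⊢; omega
            have hw : wd (c t) z = 0 := by rw [hcsupp t h1']; exact wd_zero z
            rw [hw, hczero (t+1) h2']
            simp
  intro k hk1 hk2 z hz
  obtain ⟨c, -, hsupp, hrep⟩ := key k hk1 hk2
  rw [hrep z hz]
  apply Submodule.sum_mem
  intro t ht
  by_cases h : t ∈ Finset.Icc (n-k) (n-1)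
  · obtain ⟨h1, h2⟩ := Finset.mem_Icc.1 h
    exact Submodule.smul_mem _ _ (Submodule.subset_span ⟨t, h1, h2, rfl⟩)
  · have : c t z = 0 := by rw [hsupp t h]
    rw [this, zero_smul]
    exact Submodule.zero_mem _
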